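/- If the normed space (ℝ^d, ⦀·⦀) is strictly convex, then the sequence of coordinate-k norms is strictly decreasingly graded with respect to the ℓ0 pseudonorm: for every l ∈ {1,…,d} and every x ∈ ℝ^d, ℓ0(x) ≤ l if and only if ⦀x⦀_l = ⦀x⦀. -/

import Mathlib

open scoped BigOperators

noncomputable section

/-- The Euclidean pairing `⟨x,y⟩ = ∑ i, x i * y i` on `Fin d → ℝ`. -/
def dotp {d : ℕ} (x y : Fin d → ℝ) : ℝ := ∑ i, x i * y i

/-- The coordinate subspace `R_K` of vectors vanishing outside `K`. -/
def RK {d : ℕ} (K : Finset (Fin d)) : Set (Fin d → ℝ) := {x | ∀ j ∉ K, x j = 0}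

/-- Orthogonal projection onto `R_K`. -/
def projK {d : ℕ} (K : Finset (Fin d)) (x : Fin d → ℝ) : Fin d → ℝ :=
  fun i => if i ∈ K then x i else 0

/-- The ℓ0 pseudonorm: number of nonzero components. -/
def ell0 {d : ℕ} (x : Fin d → ℝ) : ℕ := (Function.support x).ncard

/-- `N` is a norm on `ℝ^d`. -/
structure IsNorm {d : ℕ} (N : (Fin d → ℝ) → ℝ) : Prop where
  eq_zero_iff : ∀ x, N x = 0 ↔ x = 0
  smul : ∀ (c : ℝ) (x : Fin d → ℝ), N (c • x) = |c| * N x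
  triangle : ∀ x y, N (x + y) ≤ N x + N y

/-- `⦀y⦀_{K,★}`: the dual norm (w.r.t. the Euclidean pairing), on the subspace `R_K`,
of the restriction of `N` to `R_K`. -/
def restStar {d : ℕ} (N : (Fin d → ℝ) → ℝ) (K : Finset (Fin d)) (y : Fin d → ℝ) : ℝ :=
  sSup {r | ∃ x ∈ RK K, N x ≤ 1 ∧ r = dotp x y}

/-- The dual coordinate-k norm `⦀y⦀_{k,★} = sup_{|K| ≤ k} ⦀y_K⦀_{K,★}`. -/
def dualCoord {d : ℕ} (N : (Fin d → ℝ) → ℝ) (k : ℕ) (y : Fin d → ℝ) : ℝ :=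
  sSup {r | ∃ K : Finset (Fin d), K.card ≤ k ∧ r = restStar N K (projK K y)}

/-- The coordinate-k norm: the dual norm of the dual coordinate-k norm. -/
def coordNorm {d : ℕ} (N : (Fin d → ℝ) → ℝ) (k : ℕ) (x : Fin d → ℝ) : ℝ :=
  sSup {r | ∃ y : Fin d → ℝ, dualCoord N k y ≤ 1 ∧ r = dotp x y}

/-!
If `x` is supported on some `K` with `|K| ≤ l`, every `y` in the unit ball of the dual
coordinate-`l` norm satisfies `⟨x, y⟩ ≤ ⦀x⦀`, while a Hahn–Banach functional norming `x` lies in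
that ball; hence `⦀x⦀_l = ⦀x⦀`.

Conversely, the convex hull `C` of the sets `B ∩ R_K`, `|K| ≤ l`, is compact, and separating
`u = x / ⦀x⦀` from `C` by a hyperplane would give `⦀x⦀_l > ⦀x⦀`. So `⦀x⦀_l = ⦀x⦀` forces `u ∈ C`.
By strict convexity `u` is an extreme point of `B ⊇ C`, hence of `C`, and the extreme points of a
convex hull lie in the generating set: `u ∈ R_K` for some `|K| ≤ l`.
-/

namespace IsNorm

variable {d : ℕ} {N : (Fin d → ℝ) → ℝ}

lemma map_zero (hN : IsNorm N) : N 0 = 0 := (hN.eq_zero_iff 0).2 rfl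

lemma nonneg (hN : IsNorm N) (x : Fin d → ℝ) : 0 ≤ N x := by
  have hneg : N (-x) = N x := by rw [← neg_one_smul ℝ x, hN.smul]; simp
  have := hN.triangle x (-x)
  rw [add_neg_cancel, hN.map_zero, hneg] at this
  linarith

lemma pos (hN : IsNorm N) {x : Fin d → ℝ} (hx : x ≠ 0) : 0 < N x :=
  (hN.nonneg x).lt_of_ne fun h => hx ((hN.eq_zero_iff x).1 h.symm)

lemma convexOn (hN : IsNorm N) : ConvexOn ℝ Set.univ N := by
  refine ⟨convex_univ, fun x _ y _ a b ha hb _ => ?_⟩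
  calc N (a • x + b • y) ≤ N (a • x) + N (b • y) := hN.triangle _ _
    _ = a • N x + b • N y := by
      rw [hN.smul, hN.smul, abs_of_nonneg ha, abs_of_nonneg hb, smul_eq_mul, smul_eq_mul]

lemma continuous (hN : IsNorm N) : Continuous N :=
  continuousOn_univ.1 (hN.convexOn.continuousOn isOpen_univ)

lemma convex_unitBall (hN : IsNorm N) : Convex ℝ {z : Fin d → ℝ | N z ≤ 1} := by
  simpa using hN.convexOn.convex_le 1

lemma isCompact_unitBall (hN : IsNorm N) : IsCompact {z : Fin d → ℝ | N z ≤ 1} := by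
  rcases isEmpty_or_nonempty (Fin d) with _ | _
  · exact Set.subsingleton_of_subsingleton.isCompact
  obtain ⟨e, he, hmin⟩ := (isCompact_sphere (0 : Fin d → ℝ) 1).exists_isMinOn
    (NormedSpace.sphere_nonempty.2 zero_le_one) hN.continuous.continuousOn
  have hNe : 0 < N e := hN.pos (ne_zero_of_mem_unit_sphere ⟨e, he⟩)
  refine (isCompact_closedBall 0 (N e)⁻¹).of_isClosed_subset
    (isClosed_le hN.continuous continuous_const) fun z (hz : N z ≤ 1) => ?_
  rw [mem_closedBall_zero_iff]
  rcases eq_or_ne z 0 with rfl | hz0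
  · simpa using hNe.le
  have hz' : ‖z‖⁻¹ • z ∈ Metric.sphere (0 : Fin d → ℝ) 1 := by
    simpa using norm_smul_inv_norm (𝕜 := ℝ) hz0
  have hmin' : N e ≤ ‖z‖⁻¹ * N z := by
    simpa [hN.smul] using hmin hz'
  rw [le_inv_comm₀ (norm_pos_iff.2 hz0) hNe]
  exact hmin'.trans (mul_le_of_le_one_right (inv_nonneg.2 (norm_nonneg z)) hz)

lemma exists_linearMap_le_eq (hN : IsNorm N) (x : Fin d → ℝ) :
    ∃ g : (Fin d → ℝ) →ₗ[ℝ] ℝ, (∀ z, g z ≤ N z) ∧ g x = N x := by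
  let f : (Fin d → ℝ) →ₗ.[ℝ] ℝ := LinearPMap.mkSpanSingleton' x (N x) fun c hc => by
    rcases smul_eq_zero.1 hc with rfl | rfl <;> simp [hN.map_zero]
  have hfN : ∀ v : f.domain, f v ≤ N v := by
    rintro ⟨v, hv⟩
    obtain ⟨c, rfl⟩ := Submodule.mem_span_singleton.1 hv
    simp only [f, LinearPMap.mkSpanSingleton'_apply, RingHom.id_apply, smul_eq_mul, hN.smul]
    exact mul_le_mul_of_nonneg_right (le_abs_self c) (hN.nonneg x)
  obtain ⟨g, hgf, hgN⟩ := exists_extension_of_le_sublinear f N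
    (fun c hc z => by rw [hN.smul, abs_of_pos hc]) hN.triangle hfN
  exact ⟨g, hgN, (hgf ⟨x, Submodule.mem_span_singleton_self x⟩).trans
    (LinearPMap.mkSpanSingleton'_apply_self _ _ _ _)⟩

end IsNorm

section Coordinate

variable {d : ℕ}

lemma dotp_smul_left (c : ℝ) (x y : Fin d → ℝ) : dotp (c • x) y = c * dotp x y := by
  simp [dotp, Finset.mul_sum, mul_assoc]

lemma continuous_dotp_left (y : Fin d → ℝ) : Continuous fun x : Fin d → ℝ => dotp x y := by
  unfold dotp; fun_prop

lemma LinearMap.exists_dotp_eq (g : (Fin d → ℝ) →ₗ[ℝ] ℝ) :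
    ∃ y : Fin d → ℝ, ∀ z, dotp z y = g z :=
  ⟨fun i => g fun j => if i = j then 1 else 0, fun z => by
    simp [dotp, g.pi_apply_eq_sum_univ z]⟩

lemma smul_mem_RK {K : Finset (Fin d)} {z : Fin d → ℝ} (c : ℝ) (hz : z ∈ RK K) :
    c • z ∈ RK K := fun j hj => by simp [hz j hj]

lemma isClosed_RK (K : Finset (Fin d)) : IsClosed (RK K) := by
  simp only [RK, Set.ofPred_forall]
  exact isClosed_iInter fun j => isClosed_iInter fun _ =>
    isClosed_eq (continuous_apply j) continuous_const

lemma convex_RK (K : Finset (Fin d)) : Convex ℝ (RK K) :=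
  fun z hz w hw a b _ _ _ j hj => by simp [hz j hj, hw j hj]

lemma dotp_projK {K : Finset (Fin d)} {z : Fin d → ℝ} (hz : z ∈ RK K) (y : Fin d → ℝ) :
    dotp z (projK K y) = dotp z y := by
  refine Finset.sum_congr rfl fun i _ => ?_
  by_cases hi : i ∈ K
  · simp [projK, hi]
  · simp [projK, hi, hz i hi]

lemma ell0_le_iff {x : Fin d → ℝ} {k : ℕ} :
    ell0 x ≤ k ↔ ∃ K : Finset (Fin d), K.card ≤ k ∧ x ∈ RK K := by
  classical
  constructor
  · intro h
    have hsupp : Function.support x = ↑(Finset.univ.filter (x · ≠ 0)) := by ext; simp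
    rw [ell0, hsupp, Set.ncard_coe_finset] at h
    exact ⟨_, h, fun j hj => by simpa using hj⟩
  · rintro ⟨K, hK, hx⟩
    calc ell0 x ≤ (K : Set (Fin d)).ncard :=
          Set.ncard_le_ncard fun j hj => by_contra fun hjK => hj (hx j hjK)
      _ = K.card := Set.ncard_coe_finset K
      _ ≤ k := hK

end Coordinate

section Duality

variable {d k : ℕ} {N : (Fin d → ℝ) → ℝ}

lemma dotp_le_restStar (hN : IsNorm N) {K : Finset (Fin d)} {z : Fin d → ℝ} (hz : z ∈ RK K)
    (hNz : N z ≤ 1) (y : Fin d → ℝ) : dotp z y ≤ restStar N K y := by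
  refine le_csSup ((hN.isCompact_unitBall.image (continuous_dotp_left y)).bddAbove.mono ?_)
    ⟨z, hz, hNz, rfl⟩
  rintro _ ⟨w, -, hw, rfl⟩
  exact ⟨w, hw, rfl⟩

lemma restStar_le_dualCoord (N : (Fin d → ℝ) → ℝ) {K : Finset (Fin d)} (hK : K.card ≤ k)
    (y : Fin d → ℝ) : restStar N K (projK K y) ≤ dualCoord N k y := by
  refine le_csSup ((Set.finite_range fun K => restStar N K (projK K y)).bddAbove.mono ?_)
    ⟨K, hK, rfl⟩
  rintro _ ⟨L, -, rfl⟩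
  exact ⟨L, rfl⟩

lemma dotp_le_dualCoord_mul (hN : IsNorm N) {K : Finset (Fin d)} (hK : K.card ≤ k)
    {z : Fin d → ℝ} (hz : z ∈ RK K) (y : Fin d → ℝ) : dotp z y ≤ dualCoord N k y * N z := by
  rcases eq_or_ne z 0 with rfl | hz0
  · simp [dotp, hN.map_zero]
  have hNz := hN.pos hz0
  have hunit : N ((N z)⁻¹ • z) ≤ 1 := by
    rw [hN.smul, abs_of_pos (inv_pos.2 hNz), inv_mul_cancel₀ hNz.ne']
  have key : (N z)⁻¹ * dotp z y ≤ dualCoord N k y :=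
    calc (N z)⁻¹ * dotp z y = dotp ((N z)⁻¹ • z) (projK K y) := by
          rw [dotp_projK (smul_mem_RK _ hz), dotp_smul_left]
      _ ≤ restStar N K (projK K y) := dotp_le_restStar hN (smul_mem_RK _ hz) hunit _
      _ ≤ dualCoord N k y := restStar_le_dualCoord N hK y
  rwa [inv_mul_le_iff₀ hNz, mul_comm] at key

lemma dualCoord_le (hN : IsNorm N) {y : Fin d → ℝ} {c : ℝ}
    (h : ∀ K : Finset (Fin d), K.card ≤ k → ∀ z ∈ RK K, N z ≤ 1 → dotp z y ≤ c) :
    dualCoord N k y ≤ c := by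
  refine csSup_le ⟨_, ∅, by simp, rfl⟩ ?_
  rintro _ ⟨K, hK, rfl⟩
  refine csSup_le ⟨0, 0, fun _ _ => rfl, by simp [hN.map_zero], by simp [dotp]⟩ ?_
  rintro _ ⟨z, hz, hNz, rfl⟩
  rw [dotp_projK hz]
  exact h K hK z hz hNz

lemma coordNorm_bddAbove (hN : IsNorm N) (hk : 1 ≤ k) (x : Fin d → ℝ) :
    BddAbove {r | ∃ y : Fin d → ℝ, dualCoord N k y ≤ 1 ∧ r = dotp x y} := by
  refine ⟨∑ i, N (Pi.single i (x i)), ?_⟩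
  rintro _ ⟨y, hy, rfl⟩
  have hsingle (i : Fin d) : Pi.single i (x i) ∈ RK {i} := fun j hj => by
    simp [Pi.single_eq_of_ne (Finset.notMem_singleton.1 hj)]
  calc dotp x y = ∑ i, dotp (Pi.single i (x i)) y := by simp [dotp, Pi.single_apply]
    _ ≤ ∑ i, N (Pi.single i (x i)) := Finset.sum_le_sum fun i _ =>
        (dotp_le_dualCoord_mul hN (by simpa using hk) (hsingle i) y).trans
          (mul_le_of_le_one_left (hN.nonneg _) hy)

lemma dotp_le_coordNorm (hN : IsNorm N) (hk : 1 ≤ k) {x y : Fin d → ℝ}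
    (hy : dualCoord N k y ≤ 1) : dotp x y ≤ coordNorm N k x :=
  le_csSup (coordNorm_bddAbove hN hk x) ⟨y, hy, rfl⟩

lemma coordNorm_le_of_mem_RK (hN : IsNorm N) {K : Finset (Fin d)} (hK : K.card ≤ k)
    {x : Fin d → ℝ} (hx : x ∈ RK K) : coordNorm N k x ≤ N x := by
  refine csSup_le ⟨0, 0, dualCoord_le hN fun _ _ _ _ _ => by simp [dotp], by simp [dotp]⟩ ?_
  rintro _ ⟨y, hy, rfl⟩
  exact (dotp_le_dualCoord_mul hN hK hx y).trans (mul_le_of_le_one_left (hN.nonneg x) hy)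

lemma le_coordNorm_self (hN : IsNorm N) (hk : 1 ≤ k) (x : Fin d → ℝ) :
    N x ≤ coordNorm N k x := by
  obtain ⟨g, hgN, hgx⟩ := hN.exists_linearMap_le_eq x
  obtain ⟨y, hy⟩ := g.exists_dotp_eq
  rw [← hgx, ← hy]
  exact dotp_le_coordNorm hN hk
    (dualCoord_le hN fun _ _ z _ hz => (hy z).trans_le ((hgN z).trans hz))

end Duality

section ConvexHull

variable {E : Type*} [AddCommGroup E] [Module ℝ E] [TopologicalSpace E] [ContinuousAdd E]
  [ContinuousSMul ℝ E]

theorem IsCompact.convexJoin {s t : Set E} (hs : IsCompact s) (ht : IsCompact t) :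
    IsCompact (convexJoin ℝ s t) := by
  have : _root_.convexJoin ℝ s t = (fun p : (E × E) × ℝ => (1 - p.2) • p.1.1 + p.2 • p.1.2) ''
      ((s ×ˢ t) ×ˢ Set.Icc 0 1) := by
    ext
    simp only [mem_convexJoin, segment_eq_image, Set.mem_image, Set.mem_prod, Prod.exists]
    aesop
  rw [this]
  exact ((hs.prod ht).prod isCompact_Icc).image (by fun_prop)

theorem isCompact_convexHull_biUnion {ι : Type*} (A : Finset ι) {s : ι → Set E}
    (hcpt : ∀ i, IsCompact (s i)) (hconv : ∀ i, Convex ℝ (s i)) (hne : ∀ i, (s i).Nonempty) :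
    IsCompact (convexHull ℝ (⋃ i ∈ A, s i)) := by
  classical
  induction A using Finset.induction with
  | empty => simp
  | @insert a A _ ih =>
    rcases A.eq_empty_or_nonempty with rfl | ⟨b, hb⟩
    · simpa [(hconv a).convexHull_eq] using hcpt a
    have hA : (⋃ i ∈ A, s i).Nonempty := ⟨_, Set.mem_iUnion₂.2 ⟨b, hb, (hne b).some_mem⟩⟩
    rw [Finset.set_biUnion_insert, convexHull_union (hne a) hA, (hconv a).convexHull_eq]
    exact (hcpt a).convexJoin ih

end ConvexHull

section Sparse

variable {d k : ℕ} {N : (Fin d → ℝ) → ℝ}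

-- For `1 ≤ k`, its convex hull is the unit ball of `coordNorm N k`.
def sparseBall (N : (Fin d → ℝ) → ℝ) (k : ℕ) : Set (Fin d → ℝ) :=
  ⋃ K ∈ Finset.univ.filter (fun K : Finset (Fin d) => K.card ≤ k), {z | N z ≤ 1} ∩ RK K

lemma mem_sparseBall {z : Fin d → ℝ} :
    z ∈ sparseBall N k ↔ N z ≤ 1 ∧ ∃ K : Finset (Fin d), K.card ≤ k ∧ z ∈ RK K := by
  simp [sparseBall]

lemma isCompact_convexHull_sparseBall (hN : IsNorm N) :
    IsCompact (convexHull ℝ (sparseBall N k)) :=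
  isCompact_convexHull_biUnion _ (fun K => hN.isCompact_unitBall.inter_right (isClosed_RK K))
    (fun K => hN.convex_unitBall.inter (convex_RK K))
    (fun K => ⟨0, by simp [hN.map_zero], fun _ _ => rfl⟩)

lemma convexHull_sparseBall_subset (hN : IsNorm N) :
    convexHull ℝ (sparseBall N k) ⊆ {z | N z ≤ 1} :=
  convexHull_min (fun _ hz => (mem_sparseBall.1 hz).1) hN.convex_unitBall

lemma exists_dualCoord_le_one_lt_dotp (hN : IsNorm N) {x : Fin d → ℝ}
    (hx : x ∉ convexHull ℝ (sparseBall N k)) :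
    ∃ y : Fin d → ℝ, dualCoord N k y ≤ 1 ∧ 1 < dotp x y := by
  obtain ⟨f, c, hfC, hfx⟩ := geometric_hahn_banach_closed_point (convex_convexHull ℝ _)
    (isCompact_convexHull_sparseBall hN).isClosed hx
  have hc : 0 < c := by
    simpa using hfC 0 (subset_convexHull ℝ _
      (mem_sparseBall.2 ⟨by simp [hN.map_zero], ∅, by simp, fun _ _ => rfl⟩))
  obtain ⟨y, hy⟩ := (c⁻¹ • (f : (Fin d → ℝ) →ₗ[ℝ] ℝ)).exists_dotp_eq
  simp only [LinearMap.smul_apply, ContinuousLinearMap.coe_coe, smul_eq_mul] at hy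
  refine ⟨y, dualCoord_le hN fun K hK z hz hNz => ?_, ?_⟩
  · rw [hy, inv_mul_le_iff₀ hc, mul_one]
    exact (hfC z (subset_convexHull ℝ _ (mem_sparseBall.2 ⟨hNz, K, hK, hz⟩))).le
  · rwa [hy, lt_inv_mul_iff₀ hc, mul_one]

lemma exists_mem_RK_of_coordNorm_eq (hN : IsNorm N)
    (hsc : ∀ x : Fin d → ℝ, N x = 1 → x ∈ Set.extremePoints ℝ {z : Fin d → ℝ | N z ≤ 1})
    (hk : 1 ≤ k) {x : Fin d → ℝ} (h : coordNorm N k x = N x) :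
    ∃ K : Finset (Fin d), K.card ≤ k ∧ x ∈ RK K := by
  rcases eq_or_ne x 0 with rfl | hx0
  · exact ⟨∅, by simp, fun _ _ => rfl⟩
  have hNx := hN.pos hx0
  set u := (N x)⁻¹ • x
  have hNu : N u = 1 := by rw [hN.smul, abs_of_pos (inv_pos.2 hNx), inv_mul_cancel₀ hNx.ne']
  have hxu : x = N x • u := by simp [u, smul_smul, mul_inv_cancel₀ hNx.ne']
  have huC : u ∈ convexHull ℝ (sparseBall N k) := by
    by_contra hu
    obtain ⟨y, hy, huy⟩ := exists_dualCoord_le_one_lt_dotp hN hu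
    have : N x * dotp u y ≤ N x := by
      rw [← dotp_smul_left, ← hxu, ← h]
      exact dotp_le_coordNorm hN hk hy
    exact this.not_gt ((lt_mul_iff_one_lt_right hNx).2 huy)
  obtain ⟨-, K, hK, huK⟩ := mem_sparseBall.1 <| extremePoints_convexHull_subset <|
    inter_extremePoints_subset_extremePoints_of_subset (convexHull_sparseBall_subset hN)
      ⟨huC, hsc u hNu⟩
  exact ⟨K, hK, by rw [hxu]; exact smul_mem_RK _ huK⟩

end Sparse

theorem statement8 {d : ℕ} (N : (Fin d → ℝ) → ℝ) (hN : IsNorm N)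
    (hsc : ∀ x : Fin d → ℝ, N x = 1 → x ∈ Set.extremePoints ℝ {z : Fin d → ℝ | N z ≤ 1}) :
    ∀ l : ℕ, 1 ≤ l → l ≤ d → ∀ x : Fin d → ℝ, (ell0 x ≤ l ↔ coordNorm N l x = N x) := by
  intro l hl _ x
  rw [ell0_le_iff]
  constructor
  · rintro ⟨K, hK, hx⟩
    exact (coordNorm_le_of_mem_RK hN hK hx).antisymm (le_coordNorm_self hN hl x)
  · exact exists_mem_RK_of_coordNorm_eq hN hsc hl
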